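/- arXiv:2207.05667 — 3 statements merged into one kernel-verified Lean document; each statement's English description precedes it below -/
import Mathlib

section
/- Let a⁻ and a⁺ be operators satisfying [a⁻, a⁺] = 1. Then for all natural numbers m, n: [(a⁻)^m, (a⁺)^n] = Σ_{l=1}^{min(m,n)} (−1)^{l+1} l! · C(m,l) · C(n,l) · (a⁻)^{m−l} (a⁺)^{n−l}. -/
/-!
Moving `a⁺` past `(a⁻)^k` gives `a⁺ (a⁻)^k = (a⁻)^k a⁺ - k (a⁻)^(k-1)`. With this, induction
on `n` brings `(a⁺)^n (a⁻)^m` into the anti-normal order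
`∑ₗ (-1)^l m(m-1)⋯(m-l+1) C(n,l) (a⁻)^(m-l) (a⁺)^(n-l)`, the step in `n` being Pascal's rule
for `C(n+1,l+1)`. The `l = 0` term is `(a⁻)^m (a⁺)^n`, which cancels in the commutator, and
`m(m-1)⋯(m-l+1) = l! C(m,l)`.
-/

open Finset

section Ladder

variable {R : Type*} [Ring R] {am ap : R}

theorem mul_pow_of_commutator_eq_one (h : am * ap - ap * am = 1) (k : ℕ) :
    ap * am ^ k = am ^ k * ap - k • am ^ (k - 1) := by
  have hswap : ap * am = am * ap - 1 := by rw [← h]; abel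
  induction k with
  | zero => simp
  | succ k ih =>
    rcases k with _ | k
    · simpa using hswap
    · rw [Nat.add_sub_cancel] at ih
      calc ap * am ^ (k + 1 + 1) = ap * am ^ (k + 1) * am := by rw [pow_succ _ (k + 1), mul_assoc]
        _ = am ^ (k + 1) * (ap * am) - (k + 1) • am ^ (k + 1) := by
          rw [ih, sub_mul, mul_assoc, smul_mul_assoc, ← pow_succ]
        _ = am ^ (k + 1 + 1) * ap - (k + 1 + 1) • am ^ (k + 1) := by
          rw [hswap, mul_sub, mul_one, ← mul_assoc, ← pow_succ, add_nsmul _ (k + 1), one_nsmul]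
          abel

def antinormalCoeff (m n l : ℕ) : ℤ := (-1) ^ l * (m.descFactorial l * n.choose l : ℕ)

theorem antinormalCoeff_succ_succ (m n l : ℕ) :
    antinormalCoeff m (n + 1) (l + 1) =
      antinormalCoeff m n (l + 1) - (m - l : ℕ) * antinormalCoeff m n l := by
  simp only [antinormalCoeff, Nat.choose_succ_succ', Nat.descFactorial_succ]
  push_cast
  ring

theorem antinormalCoeff_eq_zero_of_min_lt {m n l : ℕ} (hl : min m n < l) :
    antinormalCoeff m n l = 0 := by
  rcases min_lt_iff.mp hl with hm | hn
  · simp [antinormalCoeff, Nat.descFactorial_eq_zero_iff_lt.mpr hm]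
  · simp [antinormalCoeff, Nat.choose_eq_zero_of_lt hn]

theorem pow_mul_pow_eq_sum_antinormal (h : am * ap - ap * am = 1) (m n : ℕ) :
    ap ^ n * am ^ m =
      ∑ l ∈ range (n + 1), antinormalCoeff m n l • (am ^ (m - l) * ap ^ (n - l)) := by
  induction n with
  | zero => simp [antinormalCoeff]
  | succ n ih =>
    set X : ℕ → R := fun l => am ^ (m - l) * ap ^ (n + 1 - l)
    have hstep : ∀ l ∈ range (n + 1),
        ap * (am ^ (m - l) * ap ^ (n - l)) = X l - (m - l) • X (l + 1) := by
      intro l hl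
      have hln : n + 1 - l = n - l + 1 := by grind
      simp only [X, hln, Nat.add_sub_add_right, Nat.sub_sub, ← mul_assoc,
        mul_pow_of_commutator_eq_one h, sub_mul, pow_succ', smul_mul_assoc]
    calc ap ^ (n + 1) * am ^ m
        = ∑ l ∈ range (n + 1),
            antinormalCoeff m n l • (ap * (am ^ (m - l) * ap ^ (n - l))) := by
          simp only [pow_succ', mul_assoc, ih, mul_sum, mul_smul_comm]
      _ = ∑ l ∈ range (n + 1), (antinormalCoeff m n l • X l
            - ((m - l : ℕ) * antinormalCoeff m n l) • X (l + 1)) := by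
          refine sum_congr rfl fun l hl => ?_
          rw [hstep l hl, smul_sub, mul_comm, mul_smul, natCast_zsmul, smul_comm]
      _ = ∑ l ∈ range (n + 2), antinormalCoeff m (n + 1) l • X l := by
          have hshift : ∑ l ∈ range (n + 1), antinormalCoeff m n l • X l =
              ∑ l ∈ range (n + 1), antinormalCoeff m n (l + 1) • X (l + 1)
                + antinormalCoeff m n 0 • X 0 := by
            rw [← sum_range_succ' (fun l => antinormalCoeff m n l • X l),
              sum_range_succ _ (n + 1), antinormalCoeff_eq_zero_of_min_lt (by omega), zero_smul,
              add_zero]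
          rw [sum_sub_distrib, hshift, sum_range_succ' _ (n + 1)]
          simp only [antinormalCoeff_succ_succ, sub_smul, sum_sub_distrib]
          simp only [antinormalCoeff, pow_zero, Nat.descFactorial_zero, Nat.choose_zero_right]
          abel

end Ladder

/-- Anti-normal ordered higher commutators of ladder operators in a unital ring:
if `a⁻ a⁺ - a⁺ a⁻ = 1` then
`[(a⁻)^m, (a⁺)^n] = ∑_{l=1}^{min m n} (-1)^{l+1} l! C(m,l) C(n,l) (a⁻)^{m-l} (a⁺)^{n-l}`. -/
theorem ladder_commutator_antinormal {R : Type*} [Ring R] (am ap : R)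
    (h : am * ap - ap * am = 1) (m n : ℕ) :
    am ^ m * ap ^ n - ap ^ n * am ^ m =
      ∑ l ∈ Finset.Icc 1 (min m n),
        (-1 : R) ^ (l + 1) * (l.factorial * (m.choose l) * (n.choose l) : ℕ) *
          (am ^ (m - l) * ap ^ (n - l)) := by
  set X : ℕ → R := fun l => am ^ (m - l) * ap ^ (n - l)
  have hterm : ∀ l, (-1 : R) ^ (l + 1) * (l.factorial * (m.choose l) * (n.choose l) : ℕ) * X l =
      -(antinormalCoeff m n l • X l) := by
    intro l
    simp [antinormalCoeff, Nat.descFactorial_eq_factorial_mul_choose, zsmul_eq_mul, pow_succ,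
      mul_assoc]
  calc am ^ m * ap ^ n - ap ^ n * am ^ m
      = X 0 - ∑ l ∈ range (n + 1), antinormalCoeff m n l • X l := by
        rw [pow_mul_pow_eq_sum_antinormal h]; rfl
    _ = ∑ l ∈ Icc 1 n, -(antinormalCoeff m n l • X l) := by
        rw [range_eq_Ico, sum_eq_sum_Ico_succ_bot n.add_one_pos, zero_add,
          Ico_add_one_right_eq_Icc, sum_neg_distrib]
        simp [antinormalCoeff]
    _ = ∑ l ∈ Icc 1 (min m n), -(antinormalCoeff m n l • X l) := by
        refine (sum_subset (Icc_subset_Icc_right (min_le_right m n)) fun l hl hl' => ?_).symm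
        rw [antinormalCoeff_eq_zero_of_min_lt (by grind), zero_smul, neg_zero]
    _ = _ := sum_congr rfl fun l _ => (hterm l).symm
end

section
/- Let (S, ω, ⟨·,·⟩) be a finite-dimensional real inner product space with a non-degenerate symplectic form ω, and let E be the invertible operator defined by ω(v₁, v₂) = ⟨v₁, E⁻¹ v₂⟩. Then E is anti-self-adjoint (E* = −E), and writing the polar decomposition E = |E| U* with |E| = √(E*E) = √(−E²) strictly positive and U unitary, the operator J := −U is a complex structure on S, i.e. J² = −1. -/
/-!
Antisymmetry of `ω` gives `⟪E u, w⟫ = ω (E u) (E w) = -ω (E w) (E u) = -⟪E w, u⟫`, so `E* = -E`.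
Taking adjoints in `E = P U*` then gives `U P = -P U*`, and conjugating by `U` gives
`U* P = -P U`; hence `U + U*` anticommutes with `P`. Since `P = |E|` is positive and
injective, every eigenvalue `λ` of `P` is positive, while an anticommuting operator sends
the `λ`-eigenvectors of `P` to `-λ`-eigenvectors, which must vanish. So `U* = -U`, and
`U U* = 1` becomes `U² = -1`.
-/

open LinearMap

theorem LinearMap.adjoint_eq_neg_of_antisymm_pairing {S : Type*} [NormedAddCommGroup S]
    [InnerProductSpace ℝ S] [FiniteDimensional ℝ S] (ω : S →ₗ[ℝ] S →ₗ[ℝ] ℝ)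
    (hanti : ∀ v w : S, ω v w = - ω w v) (E : S →ₗ[ℝ] S)
    (hωE : ∀ v w : S, ω v (E w) = inner ℝ v w) : adjoint E = -E := by
  refine ((eq_adjoint_iff _ _).mpr fun u w => ?_).symm
  rw [neg_apply, inner_neg_left, ← hωE, hanti, hωE, neg_neg, real_inner_comm]

section

variable {𝕜 E : Type*} [RCLike 𝕜] [NormedAddCommGroup E] [InnerProductSpace 𝕜 E]

namespace LinearMap.IsPositive

theorem eq_zero_of_apply_eq_neg_smul {P : E →ₗ[𝕜] E} (hP : P.IsPositive) {c : ℝ} (hc : 0 < c)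
    {w : E} (hw : P w = -((c : 𝕜) • w)) : w = 0 := by
  have h := hP.re_inner_nonneg_left w
  rw [hw, inner_neg_left, inner_smul_real_left, inner_self_eq_norm_sq_to_K] at h
  simp only [map_neg, RCLike.smul_re, ← RCLike.ofReal_pow, RCLike.ofReal_re] at h
  have : ‖w‖ ^ 2 ≤ 0 := by nlinarith [sq_nonneg ‖w‖]
  simpa using this

variable [FiniteDimensional 𝕜 E]

theorem eigenvalues_pos {P : E →ₗ[𝕜] E} (hP : P.IsPositive) (hinj : Function.Injective P)
    {n : ℕ} (hn : Module.finrank 𝕜 E = n) (i : Fin n) : 0 < hP.isSymmetric.eigenvalues hn i := by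
  refine (hP.nonneg_eigenvalues hn i).lt_of_ne fun h0 => ?_
  have hv := hP.isSymmetric.apply_eigenvectorBasis hn i
  rw [← h0, RCLike.ofReal_zero, zero_smul, ← map_zero P] at hv
  exact (hP.isSymmetric.eigenvectorBasis hn).toBasis.ne_zero i (hinj hv)

theorem eq_zero_of_comp_eq_neg_comp {P B : E →ₗ[𝕜] E} (hP : P.IsPositive)
    (hinj : Function.Injective P) (hBP : B ∘ₗ P = -(P ∘ₗ B)) : B = 0 := by
  let v := hP.isSymmetric.eigenvectorBasis rfl
  refine v.toBasis.ext fun i => ?_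
  set μ := hP.isSymmetric.eigenvalues rfl i
  have hPv : P (v i) = (μ : 𝕜) • v i := hP.isSymmetric.apply_eigenvectorBasis rfl i
  have hPBv : P (B (v i)) = -((μ : 𝕜) • B (v i)) := by
    have := congr($hBP (v i))
    simp only [comp_apply, neg_apply, hPv, map_smul] at this
    rw [this, neg_neg]
  simpa using hP.eq_zero_of_apply_eq_neg_smul (hP.eigenvalues_pos hinj rfl i) hPBv

end LinearMap.IsPositive

variable [FiniteDimensional 𝕜 E]

theorem LinearMap.adjoint_eq_neg_of_polar {T P U : E →ₗ[𝕜] E} (hT : adjoint T = -T)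
    (hP : P.IsPositive) (hinj : Function.Injective P) (hU : adjoint U ∘ₗ U = LinearMap.id)
    (hTPU : T = P ∘ₗ adjoint U) : adjoint U = -U := by
  have hUP : U ∘ₗ P = -(P ∘ₗ adjoint U) := by
    have := congr(adjoint $hTPU)
    rw [hT, adjoint_comp, adjoint_adjoint, hP.adjoint_eq] at this
    rw [← this, hTPU]
  have hPU : P ∘ₗ U = -(adjoint U ∘ₗ P) :=
    calc P ∘ₗ U = adjoint U ∘ₗ (U ∘ₗ P) ∘ₗ U := by rw [← comp_assoc, ← comp_assoc, hU, id_comp]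
      _ = -(adjoint U ∘ₗ P) := by
        rw [hUP, neg_comp, comp_neg, comp_assoc, hU, comp_id]
  have hsum : U + adjoint U = 0 := by
    refine hP.eq_zero_of_comp_eq_neg_comp hinj ?_
    rw [add_comp, hUP, comp_add, hPU]
    abel
  exact eq_neg_of_add_eq_zero_left (add_comm U _ ▸ hsum)

end

/-- On a finite-dimensional real inner product space `S` with a non-degenerate antisymmetric
bilinear form `ω`, let `E` be the bijective operator with `ω v₁ v₂ = ⟪v₁, E⁻¹ v₂⟫`
(equivalently `ω v (E w) = ⟪v, w⟫`).  Then `E* = -E`, and for any polar decomposition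
`E = P ∘ U*` with `P` the positive square root of `E* E` and `U` unitary, the operator
`J = -U` is a complex structure: `J ∘ J = -1`. -/
theorem antiselfadjoint_and_complex_structure
    {S : Type*} [NormedAddCommGroup S] [InnerProductSpace ℝ S] [FiniteDimensional ℝ S]
    (ω : S →ₗ[ℝ] S →ₗ[ℝ] ℝ) (hanti : ∀ v w : S, ω v w = - ω w v)
    (E : S →ₗ[ℝ] S) (hE : Function.Bijective E)
    (hωE : ∀ v w : S, ω v (E w) = inner ℝ v w) :
    LinearMap.adjoint E = -E ∧
      ∀ P U : S →ₗ[ℝ] S,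
        LinearMap.adjoint P = P →
        (∀ v : S, (0:ℝ) ≤ inner ℝ v (P v)) →
        P ∘ₗ P = LinearMap.adjoint E ∘ₗ E →
        LinearMap.adjoint U ∘ₗ U = LinearMap.id →
        U ∘ₗ LinearMap.adjoint U = LinearMap.id →
        E = P ∘ₗ LinearMap.adjoint U →
        (-U) ∘ₗ (-U) = -(LinearMap.id : S →ₗ[ℝ] S) := by
  have hadj := adjoint_eq_neg_of_antisymm_pairing ω hanti E hωE
  refine ⟨hadj, fun P U hPsa hPnonneg hPP hUU hUU' hEPU => ?_⟩
  have hP : P.IsPositive := (isPositive_iff P).mpr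
    ⟨(isSymmetric_iff_isSelfAdjoint P).mpr hPsa, fun v => real_inner_comm v (P v) ▸ hPnonneg v⟩
  have hEE : Function.Injective (adjoint E ∘ₗ E) := by
    rw [hadj, neg_comp]
    exact neg_injective.comp (hE.injective.comp hE.injective)
  have hPinj : Function.Injective P := by
    rw [← hPP, coe_comp] at hEE
    exact hEE.of_comp
  have hUadj := adjoint_eq_neg_of_polar hadj hP hPinj hUU hEPU
  calc (-U) ∘ₗ (-U) = -(U ∘ₗ adjoint U) := by rw [hUadj, neg_comp]
    _ = -LinearMap.id := by rw [hUU']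
end

section
/- Let E be a real, invertible, antisymmetric operator on a finite-dimensional real inner product space, extended to the complexification. Then the unique operator A satisfying (i) A ≥ 0, (ii) A − Ā = iE, and (iii) A·Ā = 0 (where Ā is the entrywise complex conjugate, equal to A with E replaced by −E) is A = (1/2)(|E| + iE). -/
/-!
Put `F = i E`, a Hermitian matrix with `F * F = -E * E = P * P`; as `P ≥ 0`, `P = |F|`, so the
claimed solution is `½ (|F| + F) = F⁺`. For a nonnegative `A`, `Ā = Aᵀ` is nonnegative too, so the
axioms say precisely that `A` and `Ā` are nonnegative, orthogonal and have difference `F`: by the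
uniqueness of the decomposition of a selfadjoint element into positive and negative parts, this
forces `A = F⁺`. Conversely the conjugate of `½ (P + F)` is `½ (P - F) = F⁻`.
-/

open Matrix
open scoped ComplexOrder MatrixOrder

namespace CFC

variable {A : Type*} [NonUnitalRing A] [StarRing A] [TopologicalSpace A] [Module ℝ A]
  [SMulCommClass ℝ A A] [IsScalarTower ℝ A A] [PartialOrder A] [StarOrderedRing A]
  [NonUnitalContinuousFunctionalCalculus ℝ A IsSelfAdjoint] [NonnegSpectrumClass ℝ A]
  [IsTopologicalRing A] [T2Space A]

lemma abs_eq_of_mul_self_eq {a p : A} (ha : IsSelfAdjoint a) (hp : 0 ≤ p) (h : p * p = a * a) :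
    abs a = p := by
  rw [CFC.abs, ha.star_eq, ← h, sqrt_mul_self p hp]

variable {𝕜 : Type*} [DivisionRing 𝕜] [CharZero 𝕜] [Module 𝕜 A]

lemma half_smul_abs_add_self {a : A} (ha : IsSelfAdjoint a) :
    (1 / 2 : 𝕜) • (abs a + a) = a⁺ := by
  rw [abs_add_self a ha, two_nsmul, ← two_smul 𝕜, smul_smul]
  norm_num

lemma half_smul_abs_sub_self {a : A} (ha : IsSelfAdjoint a) :
    (1 / 2 : 𝕜) • (abs a - a) = a⁻ := by
  rw [abs_sub_self a ha, two_nsmul, ← two_smul 𝕜, smul_smul]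
  norm_num

end CFC

namespace Matrix

variable {n : Type*}

lemma PosSemidef.map_starRingEnd {𝕜 : Type*} [RCLike 𝕜] {A : Matrix n n 𝕜}
    (hA : A.PosSemidef) : (A.map (starRingEnd 𝕜)).PosSemidef := by
  have h : A.map (starRingEnd 𝕜) = Aᴴᵀ := rfl
  rw [h, hA.isHermitian.eq]
  exact hA.transpose

lemma PosSemidef.map_ofReal [Fintype n] {P : Matrix n n ℝ} (hP : P.PosSemidef) :
    (P.map Complex.ofReal).PosSemidef := by
  classical
  obtain ⟨B, rfl⟩ := CStarAlgebra.nonneg_iff_eq_star_mul_self.mp hP.nonneg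
  change ((Bᴴ * B).map Complex.ofRealHom).PosSemidef
  rw [Matrix.map_mul, conjTranspose_map Complex.ofRealHom fun x ↦ (Complex.conj_ofReal x).symm]
  exact posSemidef_conjTranspose_mul_self _

lemma isHermitian_I_smul_map_ofReal {E : Matrix n n ℝ} (hE : Eᵀ = -E) :
    (Complex.I • E.map Complex.ofReal).IsHermitian := by
  ext i j
  have hji : E j i = -E i j := by simpa using congr_fun₂ hE i j
  simp [hji]

end Matrix

theorem sorkin_johnston_unique_solution_general {n : ℕ} (E P : Matrix (Fin n) (Fin n) ℝ)
    (hEanti : Eᵀ = -E)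
    (hPpos : P.PosSemidef) (hPsq : P * P = -(E * E)) :
    ∀ A : Matrix (Fin n) (Fin n) ℂ,
      (A.PosSemidef ∧
        A - A.map (starRingEnd ℂ) = Complex.I • E.map (Complex.ofReal) ∧
        A * A.map (starRingEnd ℂ) = 0)
      ↔ A = (1 / 2 : ℂ) • (P.map (Complex.ofReal) + Complex.I • E.map (Complex.ofReal)) := by
  intro A
  set F := Complex.I • E.map Complex.ofReal
  have hF : F.IsHermitian := isHermitian_I_smul_map_ofReal hEanti
  have habs : CFC.abs F = P.map Complex.ofReal := by
    refine CFC.abs_eq_of_mul_self_eq hF hPpos.map_ofReal.nonneg ?_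
    have h := congrArg Complex.ofRealHom.mapMatrix hPsq
    rw [map_mul, map_neg, map_mul] at h
    rw [smul_mul_smul_comm, Complex.I_mul_I, neg_one_smul]
    exact h
  rw [← habs, CFC.half_smul_abs_add_self hF]
  constructor
  · rintro ⟨hA, hsub, hmul⟩
    exact (CFC.posPart_negPart_unique hsub.symm hmul hA.nonneg hA.map_starRingEnd.nonneg).1.symm
  · rintro rfl
    have hconj : F⁺.map (starRingEnd ℂ) = F⁻ := by
      rw [← CFC.half_smul_abs_add_self (𝕜 := ℂ) hF, ← CFC.half_smul_abs_sub_self (𝕜 := ℂ) hF,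
        habs]
      ext i j
      simp [F, map_ofNat, mul_add, sub_eq_add_neg]
    rw [hconj]
    exact ⟨(CFC.posPart_nonneg F).posSemidef, CFC.posPart_sub_negPart F hF,
      CFC.posPart_mul_negPart F⟩

/-- Sorkin–Johnston axioms: for a real, invertible, antisymmetric matrix `E` with positive
square root `P` of `EᵀE = -E²`, the unique complex matrix `A` that is positive semidefinite,
satisfies `A - Ā = i E` and `A Ā = 0`, is `A = ½ (P + i E)`. -/
theorem sorkin_johnston_unique_solution {n : ℕ} (E P : Matrix (Fin n) (Fin n) ℝ)
    (hEanti : Eᵀ = -E) (hEinv : IsUnit E)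
    (hPpos : P.PosSemidef) (hPsq : P * P = -(E * E)) :
    ∀ A : Matrix (Fin n) (Fin n) ℂ,
      (A.PosSemidef ∧
        A - A.map (starRingEnd ℂ) = Complex.I • E.map (Complex.ofReal) ∧
        A * A.map (starRingEnd ℂ) = 0)
      ↔ A = (1 / 2 : ℂ) • (P.map (Complex.ofReal) + Complex.I • E.map (Complex.ofReal)) :=
  sorkin_johnston_unique_solution_general E P hEanti hPpos hPsq
end
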